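/- Let d, M ∈ ℕ with M ≥ 1, let K : ℝ^d × ℝ^d → ℝ be a symmetric kernel, let f : ℝ^d → ℝ^d, let ξ_1, …, ξ_M ∈ ℝ^d, and suppose the kernel matrix 𝕂 with entries 𝕂_{ij} = K(ξ_i, ξ_j) is invertible. Let Ψ⁺ be the M×M matrix with entries Ψ⁺_{ij} = K(ξ_i, f(ξ_j)), let A := Ψ⁺ 𝕂^{-1} be the EDMD matrix, and let Π_M be the kernel interpolation operator associated with ξ_1, …, ξ_M. Then for every α ∈ ℝ^M, the function g(x) = ∑_{p=1}^M α_p K(ξ_p, x) satisfies, for all x ∈ ℝ^d: ∑_{i,j=1}^M α_i A_{ij} K(ξ_j, x) = Π_M[(Π_M[g]) ∘ f](x). That is, the EDMD approximation of the Koopman operator with kernel-section basis functions coincides with the data-dependent approximation U_f^M g := Π_M((Π_M g) ∘ f). -/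
import Mathlib


/-- With kernel-section basis functions `ψ i = K (ξ i, ·)`, the EDMD
approximation of the Koopman operator, given by the matrix `A = Ψ⁺ 𝕂⁻¹` with
`Ψ⁺ i j = K (ξ i) (f (ξ j))`, coincides with the data-dependent approximation
`U_f^M g = Π_M((Π_M g) ∘ f)`: for every coefficient vector `α` and
`g = ∑ p, α p * K (ξ p, ·)`, one has
`∑ i j, α i * A i j * K (ξ j) x = Π_M[(Π_M[g]) ∘ f](x)` for all `x`. -/
theorem edmd_eq_data_driven_koopman_approximation
    (d M : ℕ) (hM : 1 ≤ M)
    (K : (Fin d → ℝ) → (Fin d → ℝ) → ℝ)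
    (hK : ∀ x y, K x y = K y x)
    (f : (Fin d → ℝ) → (Fin d → ℝ))
    (ξ : Fin M → (Fin d → ℝ))
    (𝕂 : Matrix (Fin M) (Fin M) ℝ)
    (h𝕂 : ∀ i j, 𝕂 i j = K (ξ i) (ξ j))
    (h𝕂inv : IsUnit 𝕂.det)
    (Ψplus : Matrix (Fin M) (Fin M) ℝ)
    (hΨplus : ∀ i j, Ψplus i j = K (ξ i) (f (ξ j)))
    (A : Matrix (Fin M) (Fin M) ℝ)
    (hA : A = Ψplus * 𝕂⁻¹)
    (PiM : ((Fin d → ℝ) → ℝ) → ((Fin d → ℝ) → ℝ))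
    (hPiM : ∀ h x, PiM h x = ∑ i, ∑ j, 𝕂⁻¹ i j * h (ξ j) * K (ξ i) x) :
    ∀ (α : Fin M → ℝ) (g : (Fin d → ℝ) → ℝ),
      (∀ x, g x = ∑ p, α p * K (ξ p) x) →
      ∀ x, (∑ i, ∑ j, α i * A i j * K (ξ j) x) = PiM ((PiM g) ∘ f) x := by
  intro α g hg x
  have hsym : 𝕂.transpose = 𝕂 := by
    ext i j; simp only [Matrix.transpose_apply, h𝕂]; exact hK (ξ j) (ξ i)
  have hinv : 𝕂⁻¹ * 𝕂 = 1 := Matrix.nonsing_inv_mul 𝕂 h𝕂inv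
  have h1 : ∀ i p, (∑ j, 𝕂⁻¹ i j * 𝕂 j p) = if i = p then (1:ℝ) else 0 := by
    intro i p
    have := congrFun (congrFun hinv i) p
    simpa [Matrix.mul_apply, Matrix.one_apply] using this
  have hinvsym : ∀ i j, 𝕂⁻¹ i j = 𝕂⁻¹ j i := by
    intro i j
    have h := Matrix.transpose_nonsing_inv 𝕂
    rw [hsym] at h
    have := congrFun (congrFun h.symm i) j
    simpa [Matrix.transpose_apply] using this
  have hKpj : ∀ p j, K (ξ p) (ξ j) = 𝕂 j p := by
    intro p j; rw [h𝕂, hK]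
  -- Π_M g = g pointwise
  have hPg : ∀ y, PiM g y = ∑ a, α a * K (ξ a) y := by
    intro y
    rw [hPiM]
    calc ∑ i, ∑ j, 𝕂⁻¹ i j * g (ξ j) * K (ξ i) y
        = ∑ i, ∑ p, (∑ j, 𝕂⁻¹ i j * 𝕂 j p) * (α p * K (ξ i) y) := by
          refine Finset.sum_congr rfl fun i _ => ?_
          calc ∑ j, 𝕂⁻¹ i j * g (ξ j) * K (ξ i) y
              = ∑ j, ∑ p, 𝕂⁻¹ i j * 𝕂 j p * (α p * K (ξ i) y) := by
                refine Finset.sum_congr rfl fun j _ => ?_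
                rw [hg]
                simp only [hKpj, Finset.mul_sum, Finset.sum_mul]
                exact Finset.sum_congr rfl fun p _ => by ring
            _ = ∑ p, (∑ j, 𝕂⁻¹ i j * 𝕂 j p) * (α p * K (ξ i) y) := by
                rw [Finset.sum_comm]
                simp only [Finset.sum_mul]
      _ = ∑ a, α a * K (ξ a) y := by
          simp only [h1, ite_mul, one_mul, zero_mul]
          simp
  rw [hPiM]
  simp only [Function.comp_apply, hPg]
  calc ∑ i, ∑ j, α i * A i j * K (ξ j) x
      = ∑ a, ∑ b, ∑ c, α a * Ψplus a b * 𝕂⁻¹ b c * K (ξ c) x := by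
        refine Finset.sum_congr rfl fun i _ => ?_
        calc ∑ j, α i * A i j * K (ξ j) x
            = ∑ j, ∑ b, α i * Ψplus i b * 𝕂⁻¹ b j * K (ξ j) x := by
              refine Finset.sum_congr rfl fun j _ => ?_
              rw [hA, Matrix.mul_apply]
              simp only [Finset.mul_sum, Finset.sum_mul]
              exact Finset.sum_congr rfl fun b _ => by ring
          _ = ∑ b, ∑ c, α i * Ψplus i b * 𝕂⁻¹ b c * K (ξ c) x := Finset.sum_comm
    _ = ∑ i, ∑ j, 𝕂⁻¹ i j * (∑ a, α a * K (ξ a) (f (ξ j))) * K (ξ i) x := by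
        refine Eq.symm ?_
        calc ∑ i, ∑ j, 𝕂⁻¹ i j * (∑ a, α a * K (ξ a) (f (ξ j))) * K (ξ i) x
            = ∑ i, ∑ j, ∑ a, α a * Ψplus a j * 𝕂⁻¹ j i * K (ξ i) x := by
              refine Finset.sum_congr rfl fun i _ => Finset.sum_congr rfl fun j _ => ?_
              rw [hinvsym]
              simp only [← hΨplus, Finset.sum_mul, Finset.mul_sum]
              exact Finset.sum_congr rfl fun a _ => by ring
          _ = ∑ i, ∑ a, ∑ j, α a * Ψplus a j * 𝕂⁻¹ j i * K (ξ i) x :=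
              Finset.sum_congr rfl fun i _ => Finset.sum_comm
          _ = ∑ a, ∑ i, ∑ j, α a * Ψplus a j * 𝕂⁻¹ j i * K (ξ i) x := Finset.sum_comm
          _ = ∑ a, ∑ j, ∑ i, α a * Ψplus a j * 𝕂⁻¹ j i * K (ξ i) x :=
              Finset.sum_congr rfl fun a _ => Finset.sum_comm
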